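/- arXiv:1701.06836 — 2 statements merged into one kernel-verified Lean document; each statement's English description precedes it below -/
import Mathlib

section
/- The FOBI test statistic T_k is affine invariant: let x₁,…,x_n ∈ ℝ^p have invertible (positive definite) sample covariance Ŝ₁ = (1/n)Σᵢ (xᵢ − x̄)(xᵢ − x̄)ᵀ, let Ŝ₂ = (1/n)Σᵢ (xᵢ − x̄)(xᵢ − x̄)ᵀ Ŝ₁⁻¹ (xᵢ − x̄)(xᵢ − x̄)ᵀ, let R̂ = Ŝ₁^{-1/2} Ŝ₂ Ŝ₁^{-1/2} (with Ŝ₁^{1/2} the unique positive semidefinite square root), and for 0 ≤ k < p define T_k := inf over U ∈ ℝ^{p×(p−k)} with UᵀU = I_{p−k} of tr((Uᵀ(R̂ − (p+2)·I_p)U)²)/(p−k). Then for any invertible A ∈ ℝ^{p×p} and b ∈ ℝ^p, T_k computed from the transformed data A x₁ + b, …, A x_n + b equals T_k computed from x₁,…,x_n. -/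
/-! Under `x ↦ A x + b` the centred data become `A (xᵢ − x̄)`, so `Ŝ₁ ↦ A Ŝ₁ Aᵀ` and, since the
quadratic forms `(xᵢ − x̄)ᵀ Ŝ₁⁻¹ (xᵢ − x̄)` are unchanged, `Ŝ₂ ↦ A Ŝ₂ Aᵀ`. If `C` and `B` are the
symmetric square roots of the old and new `Ŝ₁`, then `O = B⁻¹ A C` is orthogonal because
`B² = A C² Aᵀ`, and `R̂ ↦ O R̂ Oᵀ`. Finally `U ↦ Oᵀ U` permutes the matrices with orthonormal
columns, so the infimum defining `T_k` runs over the same set of values. -/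

open Matrix
open scoped Classical

/-- Sample mean of data points `x 1, …, x n` in `ℝ^p`. -/
noncomputable def sampleMean {n p : ℕ} (x : Fin n → Fin p → ℝ) : Fin p → ℝ :=
  fun i => (1 / (n : ℝ)) * ∑ t, x t i

/-- Sample covariance matrix `Ŝ₁ = (1/n)Σᵢ (xᵢ − x̄)(xᵢ − x̄)ᵀ`. -/
noncomputable def sampleS1 {n p : ℕ} (x : Fin n → Fin p → ℝ) :
    Matrix (Fin p) (Fin p) ℝ :=
  Matrix.of fun i j =>
    (1 / (n : ℝ)) * ∑ t, (x t i - sampleMean x i) * (x t j - sampleMean x j)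

/-- Sample FOBI matrix `Ŝ₂ = (1/n)Σᵢ (xᵢ − x̄)(xᵢ − x̄)ᵀ Ŝ₁⁻¹ (xᵢ − x̄)(xᵢ − x̄)ᵀ`. -/
noncomputable def sampleS2 {n p : ℕ} (x : Fin n → Fin p → ℝ) :
    Matrix (Fin p) (Fin p) ℝ :=
  Matrix.of fun i j =>
    (1 / (n : ℝ)) * ∑ t,
      ((fun l => x t l - sampleMean x l) ⬝ᵥ
          ((sampleS1 x)⁻¹ *ᵥ fun l => x t l - sampleMean x l)) *
        ((x t i - sampleMean x i) * (x t j - sampleMean x j))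

/-- The unique positive semidefinite square root of a positive semidefinite matrix
(junk value `0` if the matrix is not positive semidefinite). -/
noncomputable def psqrt {p : ℕ} (S : Matrix (Fin p) (Fin p) ℝ) :
    Matrix (Fin p) (Fin p) ℝ :=
  if h : S.PosSemidef then
    h.1.eigenvectorUnitary.1 * diagonal ((↑) ∘ (√·) ∘ h.1.eigenvalues) *
      (star h.1.eigenvectorUnitary : Matrix (Fin p) (Fin p) ℝ)
  else 0

/-- The FOBI matrix `R̂ = Ŝ₁^{-1/2} Ŝ₂ Ŝ₁^{-1/2}` computed from the data. -/
noncomputable def sampleR {n p : ℕ} (x : Fin n → Fin p → ℝ) :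
    Matrix (Fin p) (Fin p) ℝ :=
  (psqrt (sampleS1 x))⁻¹ * sampleS2 x * (psqrt (sampleS1 x))⁻¹

/-- The FOBI test statistic
`T_k = inf_{UᵀU = I} tr((Uᵀ(R̂ − (p+2)·I)U)²)/(p−k)`. -/
noncomputable def Tstat {n p : ℕ} (k : ℕ) (x : Fin n → Fin p → ℝ) : ℝ :=
  sInf {t : ℝ | ∃ U : Matrix (Fin p) (Fin (p - k)) ℝ, Uᵀ * U = 1 ∧
    t = ((Uᵀ * (sampleR x - ((p : ℝ) + 2) • (1 : Matrix (Fin p) (Fin p) ℝ)) * U) ^ 2).trace /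
      ((p : ℝ) - (k : ℝ))}

section Congruence

variable {ι κ R : Type*} [Fintype ι] [CommRing R]

lemma vecMulVec_conj (A : Matrix ι ι R) (u v : ι → R) :
    A * vecMulVec u v * Aᵀ = vecMulVec (A *ᵥ u) (A *ᵥ v) := by
  rw [mul_vecMulVec, vecMulVec_mul, vecMul_transpose]

variable [DecidableEq ι]

lemma dotProduct_inv_conj_mulVec {S A : Matrix ι ι R} (hA : IsUnit A) (u : ι → R) :
    (A *ᵥ u) ⬝ᵥ ((A * S * Aᵀ)⁻¹ *ᵥ (A *ᵥ u)) = u ⬝ᵥ (S⁻¹ *ᵥ u) := by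
  have hAd : IsUnit A.det := (isUnit_iff_isUnit_det A).mp hA
  have hu : A⁻¹ *ᵥ (A *ᵥ u) = u := by rw [mulVec_mulVec, nonsing_inv_mul A hAd, one_mulVec]
  rw [Matrix.mul_inv_rev, Matrix.mul_inv_rev, ← mulVec_mulVec, ← mulVec_mulVec, hu,
    ← transpose_nonsing_inv, dotProduct_mulVec, vecMul_transpose, hu]

lemma exists_orthogonal_whiten_congr {A B C : Matrix ι ι R} (hB : IsUnit B) (hC : IsUnit C)
    (hBt : Bᵀ = B) (hCt : Cᵀ = C) (hBC : B * B = A * (C * C) * Aᵀ) :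
    ∃ O : Matrix ι ι R, O * Oᵀ = 1 ∧
      ∀ M, B⁻¹ * (A * M * Aᵀ) * B⁻¹ = O * (C⁻¹ * M * C⁻¹) * Oᵀ := by
  have hBd := (isUnit_iff_isUnit_det B).mp hB
  have hCd := (isUnit_iff_isUnit_det C).mp hC
  have hOt : (B⁻¹ * A * C)ᵀ = C * Aᵀ * B⁻¹ := by
    rw [transpose_mul, transpose_mul, hCt, transpose_nonsing_inv, hBt, Matrix.mul_assoc]
  refine ⟨B⁻¹ * A * C, ?_, fun M => ?_⟩
  · calc B⁻¹ * A * C * (B⁻¹ * A * C)ᵀ = B⁻¹ * (A * (C * C) * Aᵀ) * B⁻¹ := by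
          rw [hOt]; noncomm_ring
      _ = (B⁻¹ * B) * (B * B⁻¹) := by rw [← hBC]; noncomm_ring
      _ = 1 := by rw [nonsing_inv_mul B hBd, mul_nonsing_inv B hBd, Matrix.one_mul]
  · calc B⁻¹ * (A * M * Aᵀ) * B⁻¹
        = B⁻¹ * (A * ((C * C⁻¹) * M * (C⁻¹ * C)) * Aᵀ) * B⁻¹ := by
          rw [mul_nonsing_inv C hCd, nonsing_inv_mul C hCd, Matrix.one_mul, Matrix.mul_one]
      _ = B⁻¹ * A * C * (C⁻¹ * M * C⁻¹) * (B⁻¹ * A * C)ᵀ := by rw [hOt]; noncomm_ring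

lemma setOf_stiefel_conj_orthogonal [Fintype κ] [DecidableEq κ] {O : Matrix ι ι R}
    (hO : O * Oᵀ = 1) (M : Matrix ι ι R) (f : Matrix κ κ R → ℝ) :
    {t | ∃ U : Matrix ι κ R, Uᵀ * U = 1 ∧ t = f (Uᵀ * (O * M * Oᵀ) * U)} =
      {t | ∃ U : Matrix ι κ R, Uᵀ * U = 1 ∧ t = f (Uᵀ * M * U)} := by
  have hO' : Oᵀ * O = 1 := mul_eq_one_comm.mp hO
  have hconj : ∀ U : Matrix ι κ R, Uᵀ * (O * M * Oᵀ) * U = (Oᵀ * U)ᵀ * M * (Oᵀ * U) := by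
    intro U; simp only [transpose_mul, transpose_transpose, Matrix.mul_assoc]
  ext t
  constructor
  · rintro ⟨U, hU, rfl⟩
    refine ⟨Oᵀ * U, ?_, congrArg f (hconj U)⟩
    rw [transpose_mul, transpose_transpose, Matrix.mul_assoc, ← Matrix.mul_assoc O,
      hO, Matrix.one_mul, hU]
  · rintro ⟨V, hV, rfl⟩
    have hV' : Oᵀ * (O * V) = V := by rw [← Matrix.mul_assoc, hO', Matrix.one_mul]
    refine ⟨O * V, ?_, by rw [hconj, hV']⟩
    rw [transpose_mul, Matrix.mul_assoc, ← Matrix.mul_assoc Oᵀ, hO', Matrix.one_mul, hV]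

end Congruence

section SquareRoot

variable {p : ℕ} {S : Matrix (Fin p) (Fin p) ℝ}

lemma psqrt_mul_self (h : S.PosSemidef) : psqrt S * psqrt S = S := by
  rw [psqrt, dif_pos h]
  have hu : (star h.1.eigenvectorUnitary : Matrix (Fin p) (Fin p) ℝ) *
      h.1.eigenvectorUnitary.1 = 1 := Unitary.coe_star_mul_self _
  conv_rhs => rw [h.1.spectral_theorem, Unitary.conjStarAlgAut_apply]
  rw [show ∀ U D V : Matrix (Fin p) (Fin p) ℝ, U * D * V * (U * D * V) = U * (D * (V * U) * D) * V
    from fun U D V => by simp only [Matrix.mul_assoc], hu, Matrix.mul_one, diagonal_mul_diagonal]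
  congr 3
  funext i
  simp [Real.mul_self_sqrt (h.eigenvalues_nonneg i)]

lemma psqrt_transpose (h : S.PosSemidef) : (psqrt S)ᵀ = psqrt S := by
  rw [psqrt, dif_pos h, transpose_mul, transpose_mul, diagonal_transpose, Matrix.mul_assoc,
    star_eq_conjTranspose, conjTranspose_eq_transpose_of_trivial, transpose_transpose]

lemma isUnit_psqrt (h : S.PosDef) : IsUnit (psqrt S) := by
  rw [isUnit_iff_isUnit_det, isUnit_iff_ne_zero]
  intro h0
  have := h.det_pos
  rw [← psqrt_mul_self h.posSemidef, det_mul, h0, mul_zero] at this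
  exact this.false

end SquareRoot

section Sample

variable {n p : ℕ} (x : Fin n → Fin p → ℝ) (A : Matrix (Fin p) (Fin p) ℝ) (b : Fin p → ℝ)

lemma sampleS1_eq_sum :
    sampleS1 x = (1 / (n : ℝ)) • ∑ t, vecMulVec (x t - sampleMean x) (x t - sampleMean x) := by
  ext i j
  simp [sampleS1, Matrix.sum_apply, vecMulVec_apply]

lemma sampleS2_eq_sum :
    sampleS2 x = (1 / (n : ℝ)) • ∑ t, ((x t - sampleMean x) ⬝ᵥ
      ((sampleS1 x)⁻¹ *ᵥ (x t - sampleMean x))) •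
        vecMulVec (x t - sampleMean x) (x t - sampleMean x) := by
  ext i j
  simp only [sampleS2, of_apply, Matrix.smul_apply, Matrix.sum_apply, vecMulVec_apply,
    smul_eq_mul]
  rfl

lemma sampleMean_affine (hn : n ≠ 0) :
    sampleMean (fun t => A *ᵥ x t + b) = A *ᵥ sampleMean x + b := by
  have hsum : ∀ y : Fin n → Fin p → ℝ, sampleMean y = (1 / (n : ℝ)) • ∑ t, y t := by
    intro y; ext i; simp [sampleMean, Finset.sum_apply]
  rw [hsum, hsum, Finset.sum_add_distrib, ← mulVec_sum, smul_add, mulVec_smul,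
    Finset.sum_const, Finset.card_univ, Fintype.card_fin, ← Nat.cast_smul_eq_nsmul ℝ, smul_smul,
    one_div_mul_cancel (Nat.cast_ne_zero.mpr hn), one_smul]

lemma sub_sampleMean_affine (hn : n ≠ 0) (t : Fin n) :
    (A *ᵥ x t + b) - sampleMean (fun s => A *ᵥ x s + b) = A *ᵥ (x t - sampleMean x) := by
  rw [sampleMean_affine x A b hn, mulVec_sub]
  abel

lemma sampleS1_affine (hn : n ≠ 0) :
    sampleS1 (fun t => A *ᵥ x t + b) = A * sampleS1 x * Aᵀ := by
  simp only [sampleS1_eq_sum, sub_sampleMean_affine x A b hn, Matrix.mul_smul, Matrix.smul_mul,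
    Matrix.mul_sum, Matrix.sum_mul, vecMulVec_conj]

lemma sampleS2_affine (hn : n ≠ 0) (hA : IsUnit A) :
    sampleS2 (fun t => A *ᵥ x t + b) = A * sampleS2 x * Aᵀ := by
  simp only [sampleS2_eq_sum, sub_sampleMean_affine x A b hn, sampleS1_affine x A b hn,
    dotProduct_inv_conj_mulVec hA, Matrix.mul_smul, Matrix.smul_mul, Matrix.mul_sum,
    Matrix.sum_mul, vecMulVec_conj]

lemma exists_orthogonal_sampleR_affine (hn : n ≠ 0) (hS1 : (sampleS1 x).PosDef) (hA : IsUnit A) :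
    ∃ O : Matrix (Fin p) (Fin p) ℝ, O * Oᵀ = 1 ∧
      sampleR (fun t => A *ᵥ x t + b) = O * sampleR x * Oᵀ := by
  have hS1y : (sampleS1 (fun t => A *ᵥ x t + b)).PosDef := by
    rw [sampleS1_affine x A b hn, ← conjTranspose_eq_transpose_of_trivial]
    exact hS1.mul_mul_conjTranspose_same (vecMul_injective_iff_isUnit.mpr hA)
  have hsq : psqrt (sampleS1 (fun t => A *ᵥ x t + b)) * psqrt (sampleS1 (fun t => A *ᵥ x t + b))
      = A * (psqrt (sampleS1 x) * psqrt (sampleS1 x)) * Aᵀ := by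
    rw [psqrt_mul_self hS1y.posSemidef, psqrt_mul_self hS1.posSemidef, sampleS1_affine x A b hn]
  obtain ⟨O, hO, hwhiten⟩ := exists_orthogonal_whiten_congr (isUnit_psqrt hS1y)
    (isUnit_psqrt hS1) (psqrt_transpose hS1y.posSemidef) (psqrt_transpose hS1.posSemidef) hsq
  exact ⟨O, hO, by rw [sampleR, sampleR, sampleS2_affine x A b hn hA, hwhiten]⟩

end Sample

theorem Tstat_affine_invariant_general {n p : ℕ} (k : ℕ) (hn : 0 < n)
    (x : Fin n → Fin p → ℝ) (hS1 : (sampleS1 x).PosDef)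
    (A : Matrix (Fin p) (Fin p) ℝ) (hA : IsUnit A) (b : Fin p → ℝ) :
    Tstat k (fun t => A *ᵥ x t + b) = Tstat k x := by
  obtain ⟨O, hO, hR⟩ := exists_orthogonal_sampleR_affine x A b hn.ne' hS1 hA
  have hshift : sampleR (fun t => A *ᵥ x t + b) - ((p : ℝ) + 2) • (1 : Matrix (Fin p) (Fin p) ℝ)
      = O * (sampleR x - ((p : ℝ) + 2) • 1) * Oᵀ := by
    rw [hR, Matrix.mul_sub, Matrix.sub_mul, Matrix.mul_smul, Matrix.smul_mul, Matrix.mul_one, hO]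
  rw [Tstat, Tstat, hshift]
  exact congrArg sInf (setOf_stiefel_conj_orthogonal hO _ fun N => (N ^ 2).trace / ((p : ℝ) - k))

/-- Affine invariance of the FOBI test statistic: `T_k` computed from `A xᵢ + b`
equals `T_k` computed from the `xᵢ`. -/
theorem Tstat_affine_invariant {n p : ℕ} (k : ℕ) (hk : k < p) (hn : 0 < n)
    (x : Fin n → Fin p → ℝ) (hS1 : (sampleS1 x).PosDef)
    (A : Matrix (Fin p) (Fin p) ℝ) (hA : IsUnit A) (b : Fin p → ℝ) :
    Tstat k (fun t => A *ᵥ x t + b) = Tstat k x :=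
  Tstat_affine_invariant_general k hn x hS1 A hA b
end

section
/- Under the NGCA null hypothesis the value p+2 is an eigenvalue of the FOBI matrix with multiplicity at least p−q: with z₁ ∈ ℝ^q satisfying E(z₁) = 0, E[z₁z₁ᵀ] = I_q, E‖z₁‖⁴ < ∞, z₂ ∈ ℝ^{p−q} distributed as a product of independent standard normals N(0,1), z₁ and z₂ independent, and z = (z₁ᵀ, z₂ᵀ)ᵀ, the characteristic polynomial of M := E[‖z‖² z zᵀ] is divisible by (X − (p+2))^{p−q}. -/
open MeasureTheory ProbabilityTheory Matrix Polynomial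
open scoped NNReal

/-!
Since `‖z‖² = ‖z₁‖² + ‖z₂‖²`, independence makes the FOBI matrix of `z = (z₁, z₂)` block lower
triangular: each entry `E[‖z‖² z₁ᵢ z₂ⱼ]` splits into products of expectations, one of which is
`E z₁ᵢ = 0` or `E z₂ⱼ = 0`. The Gaussian block is `E‖z₁‖² · I + E[‖z₂‖² z₂ z₂ᵀ] = (q + r + 2) I`.
The value `r + 2` comes from the Gaussian moments `E x⁴ = 3` and `E x² = 1`; mixed moments with an
odd power of some coordinate vanish because the standard Gaussian measure is invariant under
flipping the sign of one coordinate.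
-/

section

variable {Ω ι κ : Type*} [MeasurableSpace Ω] [Fintype ι] [Fintype κ]

noncomputable def secondMomentMatrix (μ : Measure Ω) (Z : Ω → ι → ℝ) : Matrix ι ι ℝ :=
  Matrix.of fun i j => ∫ ω, Z ω i * Z ω j ∂μ

noncomputable def fobiMatrix (μ : Measure Ω) (Z : Ω → ι → ℝ) : Matrix ι ι ℝ :=
  Matrix.of fun i j => ∫ ω, (∑ k, Z ω k ^ 2) * (Z ω i * Z ω j) ∂μ

lemma integral_sum_sq_eq_trace {μ : Measure Ω} {Z : Ω → ι → ℝ}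
    (hZ : ∀ k, Integrable (fun ω => Z ω k ^ 2) μ) :
    ∫ ω, ∑ k, Z ω k ^ 2 ∂μ = (secondMomentMatrix μ Z).trace := by
  rw [integral_finsetSum _ fun k _ => hZ k]
  simp only [trace, diag, secondMomentMatrix, of_apply, sq]

lemma ProbabilityTheory.HasLaw.secondMomentMatrix_eq {μ : Measure Ω} {Z : Ω → ι → ℝ}
    {ν : Measure (ι → ℝ)} (hZ : HasLaw Z ν μ) : secondMomentMatrix μ Z = secondMomentMatrix ν fun x => x := by
  ext i j
  exact hZ.integral_comp (f := fun x => x i * x j) (by fun_prop)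

lemma ProbabilityTheory.HasLaw.fobiMatrix_eq {μ : Measure Ω} {Z : Ω → ι → ℝ}
    {ν : Measure (ι → ℝ)} (hZ : HasLaw Z ν μ) : fobiMatrix μ Z = fobiMatrix ν fun x => x := by
  ext i j
  exact hZ.integral_comp (f := fun x => (∑ k, x k ^ 2) * (x i * x j)) (by fun_prop)

lemma charpoly_smul_one {R : Type*} [CommRing R] [DecidableEq ι] (c : R) :
    (c • (1 : Matrix ι ι R)).charpoly = (X - C c) ^ Fintype.card ι := by
  rw [smul_one_eq_diagonal, charpoly_diagonal, Finset.prod_const, Finset.card_univ]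

section GaussianReal

lemma integral_sq_gaussianReal (v : ℝ≥0) : ∫ x, x ^ 2 ∂gaussianReal 0 v = v := by
  have h := variance_eq_sub (memLp_id_gaussianReal (μ := 0) (v := v) 2)
  rw [variance_id_gaussianReal] at h
  simpa [integral_id_gaussianReal] using h.symm

lemma deriv_eval_mul_exp_mul_sq_div_two (a : ℝ) (P : ℝ[X]) :
    deriv (fun t => P.eval t * Real.exp (a * t ^ 2 / 2))
      = fun t => (derivative P + C a * X * P).eval t * Real.exp (a * t ^ 2 / 2) := by
  funext t
  have he : HasDerivAt (fun t => Real.exp (a * t ^ 2 / 2))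
      (Real.exp (a * t ^ 2 / 2) * (a * t)) t := by
    convert (((hasDerivAt_pow 2 t).const_mul a).div_const 2).exp using 1
    push_cast
    ring
  refine ((P.hasDerivAt t).mul he).deriv.trans ?_
  simp only [eval_add, eval_mul, eval_C, eval_X]
  ring

lemma iteratedDeriv_four_exp_mul_sq_div_two (a : ℝ) :
    iteratedDeriv 4 (fun t => Real.exp (a * t ^ 2 / 2)) 0 = 3 * a ^ 2 := by
  have h1 : (fun t => Real.exp (a * t ^ 2 / 2))
      = fun t => (1 : ℝ[X]).eval t * Real.exp (a * t ^ 2 / 2) := by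
    simp
  rw [iteratedDeriv_eq_iterate, h1]
  simp only [Function.iterate_succ, Function.iterate_zero, Function.comp_apply, id,
    deriv_eval_mul_exp_mul_sq_div_two]
  simp
  ring

lemma integral_pow_four_gaussianReal (v : ℝ≥0) : ∫ x, x ^ 4 ∂gaussianReal 0 v = 3 * v ^ 2 := by
  have hmgf : mgf id (gaussianReal 0 v) = fun t => Real.exp (v * t ^ 2 / 2) := by
    funext t
    simpa using mgf_gaussianReal (p := gaussianReal 0 v) (X := id) (μ := 0) (v := v) (by simp) t
  have h := iteratedDeriv_mgf_zero (X := id) (μ := gaussianReal 0 v) (by simp) 4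
  rw [hmgf, iteratedDeriv_four_exp_mul_sq_div_two] at h
  simpa using h.symm

end GaussianReal

section FourthMoment

variable {μ : Measure Ω} [IsFiniteMeasure μ] {Z : Ω → ι → ℝ}

lemma abs_apply_le_norm (x : ι → ℝ) (i : ι) : |x i| ≤ ‖x‖ := norm_le_pi_norm x i

lemma abs_sum_sq_le_card_mul_norm_sq (x : ι → ℝ) :
    |∑ k, x k ^ 2| ≤ Fintype.card ι * ‖x‖ ^ 2 := by
  rw [abs_of_nonneg (by positivity)]
  calc ∑ k, x k ^ 2 ≤ ∑ _k : ι, ‖x‖ ^ 2 :=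
        Finset.sum_le_sum fun k _ => by
          rw [← sq_abs]
          gcongr
          exact abs_apply_le_norm x k
    _ = Fintype.card ι * ‖x‖ ^ 2 := by simp

lemma integrable_comp_of_abs_le_mul_norm_pow (hZ : Measurable Z)
    (hZ4 : Integrable (fun ω => ‖Z ω‖ ^ 4) μ) {f : (ι → ℝ) → ℝ} (hf : Continuous f)
    {n : ℕ} (hn : n ≤ 4) (C : ℝ) (hfC : ∀ x, |f x| ≤ C * ‖x‖ ^ n) :
    Integrable (fun ω => f (Z ω)) μ := by
  have hZn : Integrable (fun ω => ‖Z ω‖ ^ n) μ := by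
    refine ((integrable_const 1).add hZ4).mono' (by fun_prop) (ae_of_all _ fun ω => ?_)
    have h0 : 0 ≤ ‖Z ω‖ := norm_nonneg _
    rw [Real.norm_of_nonneg (by positivity)]
    show ‖Z ω‖ ^ n ≤ 1 + ‖Z ω‖ ^ 4
    rcases le_total ‖Z ω‖ 1 with h1 | h1
    · linarith [pow_le_one₀ h0 h1 (n := n), pow_nonneg h0 4]
    · linarith [pow_le_pow_right₀ h1 hn]
  exact (hZn.const_mul C).mono' (hf.comp_aestronglyMeasurable hZ.aestronglyMeasurable)
    (ae_of_all _ fun ω => hfC (Z ω))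

variable (hZ : Measurable Z) (hZ4 : Integrable (fun ω => ‖Z ω‖ ^ 4) μ)
include hZ hZ4

lemma integrable_apply (i : ι) : Integrable (fun ω => Z ω i) μ :=
  integrable_comp_of_abs_le_mul_norm_pow hZ hZ4 (continuous_apply i) (n := 1) (by norm_num) 1
    fun x => by simpa using abs_apply_le_norm x i

lemma integrable_apply_mul_apply (i j : ι) : Integrable (fun ω => Z ω i * Z ω j) μ :=
  integrable_comp_of_abs_le_mul_norm_pow hZ hZ4 (f := fun x => x i * x j) (by fun_prop) (n := 2)
    (by norm_num) 1 fun x => by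
      rw [abs_mul, one_mul, sq]
      gcongr <;> exact abs_apply_le_norm x _

lemma integrable_sum_sq : Integrable (fun ω => ∑ k, Z ω k ^ 2) μ :=
  integrable_comp_of_abs_le_mul_norm_pow hZ hZ4 (f := fun x => ∑ k, x k ^ 2) (by fun_prop)
    (by norm_num) _ abs_sum_sq_le_card_mul_norm_sq

lemma integrable_sum_sq_mul_apply (i : ι) : Integrable (fun ω => (∑ k, Z ω k ^ 2) * Z ω i) μ :=
  integrable_comp_of_abs_le_mul_norm_pow hZ hZ4 (f := fun x => (∑ k, x k ^ 2) * x i)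
    (by fun_prop) (n := 3) (by norm_num) (Fintype.card ι) fun x => by
      rw [abs_mul, pow_succ, ← mul_assoc]
      gcongr ?_ * ?_
      exacts [abs_sum_sq_le_card_mul_norm_sq x, abs_apply_le_norm x i]

lemma integrable_sum_sq_mul_apply_mul_apply (i j : ι) :
    Integrable (fun ω => (∑ k, Z ω k ^ 2) * (Z ω i * Z ω j)) μ :=
  integrable_comp_of_abs_le_mul_norm_pow hZ hZ4 (f := fun x => (∑ k, x k ^ 2) * (x i * x j))
    (by fun_prop) (n := 4) (by norm_num) (Fintype.card ι) fun x => by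
      calc |(∑ k, x k ^ 2) * (x i * x j)| = |∑ k, x k ^ 2| * (|x i| * |x j|) := by
            rw [abs_mul, abs_mul]
        _ ≤ (Fintype.card ι * ‖x‖ ^ 2) * (‖x‖ * ‖x‖) := by
            gcongr ?_ * (?_ * ?_)
            exacts [abs_sum_sq_le_card_mul_norm_sq x, abs_apply_le_norm x i, abs_apply_le_norm x j]
        _ = Fintype.card ι * ‖x‖ ^ 4 := by ring

lemma integrable_sq_apply_mul_apply_mul_apply (k i j : ι) :
    Integrable (fun ω => Z ω k ^ 2 * (Z ω i * Z ω j)) μ :=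
  integrable_comp_of_abs_le_mul_norm_pow hZ hZ4 (f := fun x => x k ^ 2 * (x i * x j))
    (by fun_prop) (n := 4) (by norm_num) 1 fun x => by
      calc |x k ^ 2 * (x i * x j)| = |x k| ^ 2 * (|x i| * |x j|) := by
            rw [abs_mul, abs_mul, abs_pow]
        _ ≤ ‖x‖ ^ 2 * (‖x‖ * ‖x‖) := by
            gcongr ?_ ^ 2 * (?_ * ?_)
            exacts [abs_apply_le_norm x k, abs_apply_le_norm x i, abs_apply_le_norm x j]
        _ = 1 * ‖x‖ ^ 4 := by ring

end FourthMoment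

section StdGaussianPi

noncomputable abbrev stdGaussianPi (ι : Type*) [Fintype ι] : Measure (ι → ℝ) :=
  Measure.pi fun _ : ι => gaussianReal 0 1

lemma integral_eval_stdGaussianPi (i : ι) : ∫ x, x i ∂stdGaussianPi ι = 0 := by
  rw [integral_eval, integral_id_gaussianReal]

lemma integrable_norm_pow_four_stdGaussianPi :
    Integrable (fun x : ι → ℝ => ‖x‖ ^ 4) (stdGaussianPi ι) := by
  have : MemLp id (4 : ℕ) (stdGaussianPi ι) :=
    memLp_pi_iff.2 fun i =>
      (memLp_id_gaussianReal 4).comp_measurePreserving (measurePreserving_eval _ i)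
  exact this.integrable_norm_pow (by norm_num)

lemma integral_comp_eval_mul_comp_eval_stdGaussianPi {i j : ι} (hij : i ≠ j) {f g : ℝ → ℝ}
    (hf : Measurable f) (hg : Measurable g) :
    ∫ x, f (x i) * g (x j) ∂stdGaussianPi ι
      = (∫ t, f t ∂gaussianReal 0 1) * ∫ t, g t ∂gaussianReal 0 1 := by
  have hind : IndepFun (fun x : ι → ℝ => f (x i)) (fun x => g (x j)) (stdGaussianPi ι) :=
    ((iIndepFun_pi (X := fun _ => id) fun _ => aemeasurable_id).indepFun hij).comp hf hg
  rw [hind.integral_fun_mul_eq_mul_integral (hf.comp (measurable_pi_apply i)).aestronglyMeasurable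
    (hg.comp (measurable_pi_apply j)).aestronglyMeasurable,
    integral_comp_eval hf.aestronglyMeasurable, integral_comp_eval hg.aestronglyMeasurable]

variable [DecidableEq ι]

lemma measurePreserving_update_neg_stdGaussianPi (i : ι) :
    MeasurePreserving (fun x : ι → ℝ => Function.update x i (-x i))
      (stdGaussianPi ι) (stdGaussianPi ι) := by
  set f : ι → ℝ → ℝ := Function.update (fun _ => id) i Neg.neg
  have hf : (fun x : ι → ℝ => Function.update x i (-x i)) = fun x j => f j (x j) := by
    funext x j
    by_cases h : j = i
    · subst h; simp [f]
    · simp [f, h]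
  have hfm : ∀ j, Measurable (f j) := by
    intro j
    by_cases h : j = i
    · subst h; simpa [f] using measurable_neg
    · simpa [f, h] using measurable_id
  have hmap : ∀ j, (gaussianReal 0 1).map (f j) = gaussianReal 0 1 := by
    intro j
    by_cases h : j = i
    · subst h; simpa [f] using gaussianReal_map_neg (μ := 0) (v := 1)
    · simp [f, h]
  rw [hf]
  refine ⟨measurable_pi_lambda _ fun j => (hfm j).comp (measurable_pi_apply j), ?_⟩
  rw [Measure.pi_map_pi fun j => (hfm j).aemeasurable]
  simp only [hmap]

lemma integral_stdGaussianPi_eq_zero_of_odd (i : ι) {F : (ι → ℝ) → ℝ}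
    (hF : ∀ x, F (Function.update x i (-x i)) = -F x) :
    ∫ x, F x ∂stdGaussianPi ι = 0 := by
  have hinv : Function.Involutive fun x : ι → ℝ => Function.update x i (-x i) := by
    intro x
    simp
  have hmp := measurePreserving_update_neg_stdGaussianPi i
  have h := hmp.integral_comp
    (MeasurableEquiv.ofInvolutive _ hinv hmp.measurable).measurableEmbedding F
  simp only [hF, integral_neg] at h
  linarith

lemma sum_sq_update_neg (x : ι → ℝ) (i : ι) :
    ∑ k, Function.update x i (-x i) k ^ 2 = ∑ k, x k ^ 2 :=
  Finset.sum_congr rfl fun k _ => by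
    rcases eq_or_ne k i with rfl | hk
    · simp
    · simp [hk]

lemma secondMomentMatrix_stdGaussianPi :
    secondMomentMatrix (stdGaussianPi ι) (fun x => x) = 1 := by
  ext i j
  simp only [secondMomentMatrix, of_apply, one_apply]
  split_ifs with hij
  · subst hij
    simpa [sq] using (integral_comp_eval (μ := fun _ : ι => gaussianReal 0 1) (i := i)
      (f := fun t => t ^ 2) (by fun_prop)).trans (integral_sq_gaussianReal 1)
  · exact integral_stdGaussianPi_eq_zero_of_odd i fun x => by
      simp [Function.update_of_ne (Ne.symm hij)]

lemma fobiMatrix_stdGaussianPi :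
    fobiMatrix (stdGaussianPi ι) (fun x => x) = ((Fintype.card ι : ℝ) + 2) • 1 := by
  ext i j
  simp only [fobiMatrix, of_apply, Matrix.smul_apply, one_apply, smul_eq_mul]
  split_ifs with hij
  · subst hij
    have hterm : ∀ k, ∫ x, x k ^ 2 * (x i * x i) ∂stdGaussianPi ι = if k = i then 3 else 1 := by
      intro k
      split_ifs with hki
      · subst hki
        have h4 : ∀ t : ℝ, t ^ 2 * (t * t) = t ^ 4 := fun t => by ring
        simpa [h4] using (integral_comp_eval (μ := fun _ : ι => gaussianReal 0 1) (i := k)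
          (f := fun t => t ^ 4) (by fun_prop)).trans (integral_pow_four_gaussianReal 1)
      · rw [integral_comp_eval_mul_comp_eval_stdGaussianPi hki (f := fun t => t ^ 2)
          (g := fun t => t * t) (by fun_prop) (by fun_prop)]
        simp [← sq, integral_sq_gaussianReal]
    have hsum : ∀ k, (if k = i then (3 : ℝ) else 1) = 1 + if k = i then 2 else 0 := by
      intro k
      split_ifs <;> norm_num
    simp_rw [Finset.sum_mul]
    rw [integral_finsetSum _ fun k _ => integrable_sq_apply_mul_apply_mul_apply measurable_id'
      integrable_norm_pow_four_stdGaussianPi k i i]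
    simp [hterm, hsum, Finset.sum_add_distrib]
  · rw [mul_zero]
    exact integral_stdGaussianPi_eq_zero_of_odd i fun x => by
      simp [sum_sq_update_neg, Function.update_of_ne (Ne.symm hij)]

end StdGaussianPi

section Independent

variable {μ : Measure Ω} [IsFiniteMeasure μ] {Z₁ : Ω → ι → ℝ} {Z₂ : Ω → κ → ℝ}

lemma sum_sq_sumElim (a : ι → ℝ) (b : κ → ℝ) :
    ∑ k, Sum.elim a b k ^ 2 = ∑ k, a k ^ 2 + ∑ k, b k ^ 2 := by
  simp [Fintype.sum_sum_type]

variable (hZ₁ : Measurable Z₁) (hZ₂ : Measurable Z₂) (hZ₁4 : Integrable (fun ω => ‖Z₁ ω‖ ^ 4) μ)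
  (hZ₂4 : Integrable (fun ω => ‖Z₂ ω‖ ^ 4) μ) (hZ₁₂ : IndepFun Z₁ Z₂ μ)
include hZ₁ hZ₂ hZ₁4 hZ₂4 hZ₁₂

lemma toBlocks₁₂_fobiMatrix_sumElim (hZ₁0 : ∀ i, ∫ ω, Z₁ ω i ∂μ = 0)
    (hZ₂0 : ∀ j, ∫ ω, Z₂ ω j ∂μ = 0) :
    (fobiMatrix μ fun ω => Sum.elim (Z₁ ω) (Z₂ ω)).toBlocks₁₂ = 0 := by
  ext i j
  have hsplit : ∀ ω, (∑ k, Sum.elim (Z₁ ω) (Z₂ ω) k ^ 2) * (Z₁ ω i * Z₂ ω j)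
      = (∑ k, Z₁ ω k ^ 2) * Z₁ ω i * Z₂ ω j + Z₁ ω i * ((∑ k, Z₂ ω k ^ 2) * Z₂ ω j) := by
    intro ω
    rw [sum_sq_sumElim]
    ring
  have hind₁ : IndepFun (fun ω => (∑ k, Z₁ ω k ^ 2) * Z₁ ω i) (fun ω => Z₂ ω j) μ :=
    hZ₁₂.comp (φ := fun x : ι → ℝ => (∑ k, x k ^ 2) * x i) (ψ := fun y : κ → ℝ => y j)
      (by fun_prop) (by fun_prop)
  have hind₂ : IndepFun (fun ω => Z₁ ω i) (fun ω => (∑ k, Z₂ ω k ^ 2) * Z₂ ω j) μ :=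
    hZ₁₂.comp (φ := fun x : ι → ℝ => x i) (ψ := fun y : κ → ℝ => (∑ k, y k ^ 2) * y j)
      (by fun_prop) (by fun_prop)
  have hF₁ := integrable_sum_sq_mul_apply hZ₁ hZ₁4 i
  have hG₁ := integrable_apply hZ₂ hZ₂4 j
  have hF₂ := integrable_apply hZ₁ hZ₁4 i
  have hG₂ := integrable_sum_sq_mul_apply hZ₂ hZ₂4 j
  have hI₁ : Integrable (fun ω => (∑ k, Z₁ ω k ^ 2) * Z₁ ω i * Z₂ ω j) μ :=
    hind₁.integrable_mul hF₁ hG₁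
  have hI₂ : Integrable (fun ω => Z₁ ω i * ((∑ k, Z₂ ω k ^ 2) * Z₂ ω j)) μ :=
    hind₂.integrable_mul hF₂ hG₂
  simp only [toBlocks₁₂, fobiMatrix, of_apply, Sum.elim_inl, Sum.elim_inr, hsplit,
    Matrix.zero_apply]
  rw [integral_add hI₁ hI₂, hind₁.integral_fun_mul_eq_mul_integral hF₁.1 hG₁.1,
    hind₂.integral_fun_mul_eq_mul_integral hF₂.1 hG₂.1, hZ₁0, hZ₂0, mul_zero, zero_mul, add_zero]

lemma toBlocks₂₂_fobiMatrix_sumElim :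
    (fobiMatrix μ fun ω => Sum.elim (Z₁ ω) (Z₂ ω)).toBlocks₂₂
      = (∫ ω, ∑ k, Z₁ ω k ^ 2 ∂μ) • secondMomentMatrix μ Z₂ + fobiMatrix μ Z₂ := by
  ext i j
  have hsplit : ∀ ω, (∑ k, Sum.elim (Z₁ ω) (Z₂ ω) k ^ 2) * (Z₂ ω i * Z₂ ω j)
      = (∑ k, Z₁ ω k ^ 2) * (Z₂ ω i * Z₂ ω j) + (∑ k, Z₂ ω k ^ 2) * (Z₂ ω i * Z₂ ω j) := by
    intro ω
    rw [sum_sq_sumElim, add_mul]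
  have hind : IndepFun (fun ω => ∑ k, Z₁ ω k ^ 2) (fun ω => Z₂ ω i * Z₂ ω j) μ :=
    hZ₁₂.comp (φ := fun x : ι → ℝ => ∑ k, x k ^ 2) (ψ := fun y : κ → ℝ => y i * y j)
      (by fun_prop) (by fun_prop)
  have hF := integrable_sum_sq hZ₁ hZ₁4
  have hG := integrable_apply_mul_apply hZ₂ hZ₂4 i j
  have hI : Integrable (fun ω => (∑ k, Z₁ ω k ^ 2) * (Z₂ ω i * Z₂ ω j)) μ :=
    hind.integrable_mul hF hG
  simp only [toBlocks₂₂, fobiMatrix, secondMomentMatrix, of_apply, Sum.elim_inr, hsplit,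
    Matrix.add_apply, Matrix.smul_apply, smul_eq_mul]
  rw [integral_add hI (integrable_sum_sq_mul_apply_mul_apply hZ₂ hZ₂4 i j),
    hind.integral_fun_mul_eq_mul_integral hF.1 hG.1]

end Independent

end

/-- Under the NGCA null hypothesis, `p + 2` is an eigenvalue of the FOBI matrix
`M = E[‖z‖² z zᵀ]` with multiplicity at least `p − q`: the characteristic polynomial of
`M` is divisible by `(X − (p+2))^{p−q}` (here `p = q + r`). -/
theorem fobi_eigenvalue_multiplicity {Ω : Type*} [MeasurableSpace Ω]
    {μ : Measure Ω} [IsProbabilityMeasure μ] {q r : ℕ}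
    (z1 : Ω → Fin q → ℝ) (z2 : Ω → Fin r → ℝ)
    (hz1m : Measurable z1) (hz2m : Measurable z2)
    (hmean : ∀ i, ∫ ω, z1 ω i ∂μ = 0)
    (hcov : ∀ i j, ∫ ω, z1 ω i * z1 ω j ∂μ = if i = j then 1 else 0)
    (hmom4 : Integrable (fun ω => ‖z1 ω‖ ^ 4) μ)
    (hz2 : Measure.map z2 μ = Measure.pi fun _ : Fin r => gaussianReal 0 1)
    (hindep : IndepFun z1 z2 μ) :
    (X - C ((q : ℝ) + (r : ℝ) + 2)) ^ r ∣
      (Matrix.of fun i j : Fin q ⊕ Fin r =>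
        ∫ ω, (∑ k : Fin q ⊕ Fin r, (Sum.elim (z1 ω) (z2 ω) k) ^ 2) *
          (Sum.elim (z1 ω) (z2 ω) i * Sum.elim (z1 ω) (z2 ω) j) ∂μ).charpoly := by
  classical
  have hz2law : HasLaw z2 (stdGaussianPi (Fin r)) μ := ⟨hz2m.aemeasurable, hz2⟩
  have hz2mom4 : Integrable (fun ω => ‖z2 ω‖ ^ 4) μ :=
    ((hz2law.measurePreserving hz2m).integrable_comp (by fun_prop)).2
      integrable_norm_pow_four_stdGaussianPi
  have hz2mean : ∀ j, ∫ ω, z2 ω j ∂μ = 0 := fun j =>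
    (hz2law.integral_comp (measurable_pi_apply j).aestronglyMeasurable).trans
      (integral_eval_stdGaussianPi j)
  have hz1trace : ∫ ω, ∑ k, z1 ω k ^ 2 ∂μ = q := by
    have hz1cov : secondMomentMatrix μ z1 = 1 := by
      ext i j
      rw [one_apply]
      exact hcov i j
    rw [integral_sum_sq_eq_trace fun k => by
        simpa only [sq] using integrable_apply_mul_apply hz1m hmom4 k k,
      hz1cov, trace_one, Fintype.card_fin]
  set M := fobiMatrix μ fun ω => Sum.elim (z1 ω) (z2 ω)
  have hM₂₂ : M.toBlocks₂₂ = ((q : ℝ) + r + 2) • 1 := by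
    rw [toBlocks₂₂_fobiMatrix_sumElim hz1m hz2m hmom4 hz2mom4 hindep, hz1trace,
      hz2law.secondMomentMatrix_eq, hz2law.fobiMatrix_eq, secondMomentMatrix_stdGaussianPi,
      fobiMatrix_stdGaussianPi, Fintype.card_fin]
    module
  change (X - C _) ^ r ∣ M.charpoly
  rw [← fromBlocks_toBlocks M, toBlocks₁₂_fobiMatrix_sumElim hz1m hz2m hmom4 hz2mom4 hindep hmean
    hz2mean, charpoly_fromBlocks_zero₁₂, hM₂₂, charpoly_smul_one, Fintype.card_fin]
  exact dvd_mul_left _ _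
end
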